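/- arXiv:1304.3955 — 2 statements merged into one kernel-verified Lean document; each statement's English description precedes it below -/
import Mathlib

section
/- If there exists a rapid ultrafilter on ℕ, then there exists a rapid idempotent ultrafilter on ℕ; in fact every ultrafilter in the closed left ideal βℕ + p = {q + p : q ∈ βℕ} is rapid, and this ideal contains an idempotent. -/
def Rapid (p : Ultrafilter ℕ) : Prop :=
  ∀ f : ℕ → ℕ, ∃ A ∈ p, ∀ i : ℕ, 0 < i → ((A : Set ℕ) ∩ Set.Iio (f i)).ncard < i

/-- `q + p`: `A ∈ q + p` iff `{m : {n : m + n ∈ A} ∈ p} ∈ q`. -/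
def addUF (q p : Ultrafilter ℕ) : Ultrafilter ℕ :=
  q.bind fun m => p.map fun n => m + n

attribute [local instance] Ultrafilter.add Ultrafilter.addSemigroup

lemma ncard_prod' {α β : Type*} (s : Set α) (t : Set β) :
    (s ×ˢ t).ncard = s.ncard * t.ncard := by
  rw [← Nat.card_coe_set_eq, ← Nat.card_coe_set_eq, ← Nat.card_coe_set_eq,
    Nat.card_congr (Equiv.Set.prod s t), Nat.card_prod]

lemma rapid_le_cofinite (p : Ultrafilter ℕ) (hp : Rapid p) : (p : Filter ℕ) ≤ Filter.cofinite := by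
  rw [Filter.le_cofinite_iff_compl_singleton_mem]
  intro x
  obtain ⟨A, hA, hAc⟩ := hp (fun _ => x + 1)
  have h1 := hAc 1 one_pos
  have hfin : ((A : Set ℕ) ∩ Set.Iio (x + 1)).Finite :=
    (Set.finite_Iio _).subset Set.inter_subset_right
  have hempty : (A : Set ℕ) ∩ Set.Iio (x + 1) = ∅ := by
    rw [← Set.ncard_eq_zero hfin]; omega
  refine Filter.mem_of_superset hA fun a ha hax => ?_
  simp only [Set.mem_singleton_iff] at hax
  subst hax
  have : a ∈ (A : Set ℕ) ∩ Set.Iio (a + 1) := ⟨ha, by simp⟩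
  simp [hempty] at this

lemma rapid_addUF (p : Ultrafilter ℕ) (hp : Rapid p) (q : Ultrafilter ℕ) : Rapid (addUF q p) := by
  intro f
  set F : ℕ → ℕ := fun i => (Finset.range (i + 1)).sup f with hF
  have hfF : ∀ i, f i ≤ F i := fun i => Finset.le_sup (by simp)
  have hFmono : Monotone F := fun a b hab =>
    Finset.sup_mono (Finset.range_subset_range.mpr (by omega))
  obtain ⟨B, hB, hBc⟩ := hp (fun j => F (j * j))
  -- B is infinite
  have hBinf : (B : Set ℕ).Infinite := by
    intro hfin
    have : (B : Set ℕ)ᶜ ∈ p := rapid_le_cofinite p hp (by simpa using hfin)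
    have := p.toFilter.inter_sets hB this
    simp at this
  set A : Set ℕ := {k | ∃ b, b ∈ B ∧ b ≤ k ∧ k - b < ((B : Set ℕ) ∩ Set.Iio b).ncard} with hA
  have hmemA : A ∈ addUF q p := by
    have key : ∀ m : ℕ, {n | m + n ∈ A} ∈ p := by
      intro m
      obtain ⟨S, hSB, hSfin, hScard⟩ := hBinf.exists_subset_ncard_eq (m + 1)
      obtain ⟨c, hc⟩ := hSfin.bddAbove
      have hsub : (B : Set ℕ) ∩ (Set.Iio (c + 1))ᶜ ⊆ {n | m + n ∈ A} := by
        rintro b ⟨hbB, hbc⟩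
        simp only [Set.mem_compl_iff, Set.mem_Iio, not_lt] at hbc
        refine ⟨b, hbB, by omega, ?_⟩
        have hSsub : S ⊆ (B : Set ℕ) ∩ Set.Iio b := by
          intro x hx
          exact ⟨hSB hx, by have := hc hx; simp only [Set.mem_Iio]; omega⟩
        have := Set.ncard_le_ncard hSsub ((Set.finite_Iio b).subset Set.inter_subset_right)
        omega
      refine Filter.mem_of_superset ?_ hsub
      exact p.toFilter.inter_sets hB
        (rapid_le_cofinite p hp (by simp [Set.Finite.compl_mem_cofinite, Set.finite_Iio]))
    have hiff : A ∈ addUF q p ↔ {m | {n | m + n ∈ A} ∈ p} ∈ q := by rw [addUF]; rfl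
    rw [hiff]
    have : {m | {n | m + n ∈ A} ∈ p} = Set.univ := Set.eq_univ_of_forall key
    rw [this]
    exact Filter.univ_mem
  refine ⟨A, hmemA, fun i hi => ?_⟩
  set N := f i
  set j := Nat.sqrt (i - 1) + 1 with hj
  set s := ((B : Set ℕ) ∩ Set.Iio N).ncard with hs
  have hsj : s < j := by
    have hij : i ≤ j * j := by
      have := Nat.lt_succ_sqrt (i - 1)
      rw [Nat.succ_eq_add_one] at this
      simp only [hj]; omega
    have hNle : N ≤ F (j * j) := le_trans (hfF i) (hFmono hij)
    have hsub : (B : Set ℕ) ∩ Set.Iio N ⊆ (B : Set ℕ) ∩ Set.Iio (F (j * j)) :=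
      Set.inter_subset_inter_right _ (Set.Iio_subset_Iio hNle)
    have h1 := Set.ncard_le_ncard hsub ((Set.finite_Iio _).subset Set.inter_subset_right)
    have h2 := hBc j (by omega)
    omega
  -- injection into (B ∩ Iio N) ×ˢ Iio s
  classical
  set g : ℕ → ℕ × ℕ := fun k =>
    if h : k ∈ A then (h.choose, k - h.choose) else (0, 0) with hg
  have hcard : (A ∩ Set.Iio N).ncard ≤ s * s := by
    have hle : (A ∩ Set.Iio N).ncard ≤ (((B : Set ℕ) ∩ Set.Iio N) ×ˢ Set.Iio s).ncard := by
      apply Set.ncard_le_ncard_of_injOn g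
      · rintro k ⟨hkA, hkN⟩
        simp only [Set.mem_Iio] at hkN
        have hspec := hkA.choose_spec
        obtain ⟨hbB, hbk, hbr⟩ := hspec
        have hbr' : ((B : Set ℕ) ∩ Set.Iio hkA.choose).ncard ≤ s := by
          apply Set.ncard_le_ncard
          · exact Set.inter_subset_inter_right _ (Set.Iio_subset_Iio (by omega))
          · exact (Set.finite_Iio N).subset Set.inter_subset_right
        simp only [hg, dif_pos hkA, Set.mem_prod, Set.mem_inter_iff, Set.mem_Iio]
        exact ⟨⟨hbB, by omega⟩, by omega⟩
      · rintro k1 ⟨hk1, _⟩ k2 ⟨hk2, _⟩ heq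
        simp only [hg, dif_pos hk1, dif_pos hk2, Prod.mk.injEq] at heq
        have h1 := hk1.choose_spec
        have h2 := hk2.choose_spec
        omega
    rw [ncard_prod'] at hle
    have hIio : (Set.Iio s).ncard = s := by
      rw [← Finset.coe_range, Set.ncard_coe_finset, Finset.card_range]
    rw [hIio] at hle
    exact le_trans hle (Nat.mul_le_mul_right _ le_rfl)
  have hjs : s * s ≤ i - 1 := by
    have h1 : s ≤ Nat.sqrt (i - 1) := by omega
    have h2 : Nat.sqrt (i - 1) * Nat.sqrt (i - 1) ≤ i - 1 := by
      simpa [pow_two] using Nat.sqrt_le' (i - 1)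
    calc s * s ≤ Nat.sqrt (i - 1) * Nat.sqrt (i - 1) := Nat.mul_le_mul h1 h1
      _ ≤ i - 1 := h2
  omega

lemma addUF_eq_add (q p : Ultrafilter ℕ) : addUF q p = q + p := rfl

theorem stmt_9 (p : Ultrafilter ℕ) (hp : Rapid p) :
    (∀ q : Ultrafilter ℕ, Rapid (addUF q p)) ∧
    ∃ r : Ultrafilter ℕ, (∃ q : Ultrafilter ℕ, addUF q p = r) ∧
      addUF r r = r ∧ Rapid r := by
  refine ⟨rapid_addUF p hp, ?_⟩
  obtain ⟨r, ⟨q, hq⟩, hidem⟩ :=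
    exists_idempotent_in_compact_add_subsemigroup
      (M := Ultrafilter ℕ) Ultrafilter.continuous_add_left
      (Set.range (· + p)) (Set.range_nonempty _)
      (isCompact_range (Ultrafilter.continuous_add_left p))
      (by
        rintro _ ⟨a, rfl⟩ _ ⟨b, rfl⟩
        exact ⟨a + p + b, by dsimp only; rw [add_assoc]⟩)
  simp only at hq
  refine ⟨r, ⟨q, by rw [addUF_eq_add, hq]⟩, by rw [addUF_eq_add, hidem], ?_⟩
  have : r = addUF q p := by rw [addUF_eq_add, hq]
  rw [this]
  exact rapid_addUF p hp q
end

section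
/- The set of rapid ultrafilters on ℕ is a (two-sided) ideal-absorbing set on the right: it is closed under q ↦ q + p for rapid p, and hence if nonempty it contains a minimal left ideal of (βℕ, +) and thus a minimal idempotent. -/
def IsLeftIdeal (L : Set (Ultrafilter ℕ)) : Prop :=
  L.Nonempty ∧ ∀ q ∈ L, ∀ r : Ultrafilter ℕ, addUF r q ∈ L

def IsMinimalLeftIdeal (L : Set (Ultrafilter ℕ)) : Prop :=
  IsLeftIdeal L ∧ ∀ L' ⊆ L, IsLeftIdeal L' → L' = L

/-!
Given `f` and a rapid `p`, pick `A ∈ p` that is thin below `g j = max_{i < (j+1)²} f i`, and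
shift every `n ∈ A` up by each `m` not exceeding the number of elements of `A` up to `n`.
The shifted set lies in `q + p` for every `q`, because for each `m` it contains `m + n` for all
large `n ∈ A`. Below `f i` it has at most `(k + 1) k` elements, where `k < √i` counts `A` below
`f i`, so fewer than `i`.

Hence `βℕ + p` is a closed left ideal of rapid ultrafilters; a minimal closed left ideal inside it,
obtained by Zorn's lemma and compactness, is `βℕ + q` for each of its points `q`, so it is a
minimal left ideal, and it contains an idempotent by the Ellis–Numakura lemma.
-/

open Set Filter

attribute [local instance] Ultrafilter.add Ultrafilter.addSemigroup

lemma Set.ncard_image2_le {α β γ : Type*} (f : α → β → γ) {s : Set α} {t : Set β}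
    (hs : s.Finite) (ht : t.Finite) : (image2 f s t).ncard ≤ s.ncard * t.ncard := by
  rw [← image_uncurry_prod, ← ncard_prod]
  exact ncard_image_le (hs.prod ht)

lemma Set.ncard_inter_mono_right {α : Type*} (A : Set α) {s t : Set α} (hst : s ⊆ t)
    (ht : t.Finite) : (A ∩ s).ncard ≤ (A ∩ t).ncard :=
  ncard_le_ncard (inter_subset_inter_right A hst) (ht.inter_of_right A)

lemma Set.Infinite.exists_le_ncard_inter_Iic {A : Set ℕ} (hA : A.Infinite) (m : ℕ) :
    ∃ n, m ≤ (A ∩ Iic n).ncard := by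
  obtain ⟨t, htA, htfin, rfl⟩ := hA.exists_subset_ncard_eq m
  obtain ⟨n, hn⟩ := htfin.bddAbove
  exact ⟨n, ncard_le_ncard (subset_inter htA hn) ((finite_Iic n).inter_of_right A)⟩

section LeftIdeal

variable {M : Type*} [AddSemigroup M]

def AbsorbsAddLeft (L : Set M) : Prop :=
  ∀ q ∈ L, ∀ r : M, r + q ∈ L

lemma absorbsAddLeft_range_add_right (q : M) : AbsorbsAddLeft (range (· + q)) := by
  rintro _ ⟨r, rfl⟩ r'
  exact ⟨r' + r, add_assoc r' r q⟩

lemma AbsorbsAddLeft.range_add_right_subset {L : Set M} (hL : AbsorbsAddLeft L) {q : M}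
    (hq : q ∈ L) : range (· + q) ⊆ L := by
  rintro _ ⟨r, rfl⟩
  exact hL q hq r

variable [TopologicalSpace M]

def IsClosedLeftIdeal (L : Set M) : Prop :=
  L.Nonempty ∧ IsClosed L ∧ AbsorbsAddLeft L

lemma IsClosedLeftIdeal.exists_minimal_subset [CompactSpace M] {L₀ : Set M}
    (hL₀ : IsClosedLeftIdeal L₀) : ∃ L ⊆ L₀, Minimal IsClosedLeftIdeal L := by
  refine zorn_superset_nonempty {L | IsClosedLeftIdeal L} (fun c hcS hc hcne => ?_) L₀ hL₀
  have := hcne.to_subtype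
  refine ⟨⋂₀ c, ⟨?_, isClosed_sInter fun L hL => (hcS hL).2.1, ?_⟩,
    fun L hL => sInter_subset_of_mem hL⟩
  · exact IsCompact.nonempty_sInter_of_directed_nonempty_isCompact_isClosed
      (IsChain.directedOn (r := fun s t : Set M => t ⊆ s) hc.symm)
      (fun L hL => (hcS hL).1) (fun L hL => (hcS hL).2.1.isCompact) fun L hL => (hcS hL).2.1
  · intro q hq r
    exact mem_sInter.2 fun L hL => (hcS hL).2.2 q (hq L hL) r

lemma Minimal.range_add_right_eq [CompactSpace M] [T2Space M]
    (hcont : ∀ r : M, Continuous (· + r)) {L : Set M} (hL : Minimal IsClosedLeftIdeal L)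
    {q : M} (hq : q ∈ L) : range (· + q) = L :=
  hL.eq_of_subset ⟨⟨q + q, q, rfl⟩, (hcont q).isClosedMap.isClosed_range,
    absorbsAddLeft_range_add_right q⟩ (hL.prop.2.2.range_add_right_subset hq)

theorem IsClosedLeftIdeal.exists_minimal_leftIdeal_subset [CompactSpace M] [T2Space M]
    (hcont : ∀ r : M, Continuous (· + r)) {L₀ : Set M} (hL₀ : IsClosedLeftIdeal L₀) :
    ∃ L ⊆ L₀, (L.Nonempty ∧ AbsorbsAddLeft L) ∧
      (∀ L' ⊆ L, L'.Nonempty ∧ AbsorbsAddLeft L' → L' = L) ∧ ∃ e ∈ L, e + e = e := by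
  obtain ⟨L, hLL₀, hmin⟩ := hL₀.exists_minimal_subset
  obtain ⟨hne, hclosed, habs⟩ := hmin.prop
  refine ⟨L, hLL₀, ⟨hne, habs⟩, fun L' hL'L ⟨⟨q, hq⟩, habs'⟩ => ?_, ?_⟩
  · refine hL'L.antisymm ?_
    rw [← hmin.range_add_right_eq hcont (hL'L hq)]
    exact habs'.range_add_right_subset hq
  · exact exists_idempotent_in_compact_add_subsemigroup hcont L hne hclosed.isCompact
      fun x _ y hy => habs y hy x

end LeftIdeal

lemma Rapid.le_atTop {p : Ultrafilter ℕ} (hp : Rapid p) : (p : Filter ℕ) ≤ atTop := by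
  refine atTop_basis.ge_iff.2 fun n _ => ?_
  obtain ⟨A, hA, hsmall⟩ := hp fun _ => n
  have hempty : A ∩ Iio n = ∅ := by
    simpa [ncard_eq_zero ((finite_Iio n).inter_of_right A)] using hsmall 1 one_pos
  filter_upwards [hA] with k hk
  by_contra hkn
  exact hempty.subset ⟨hk, mem_Iio.2 (not_le.1 hkn)⟩

def rankShift (A : Set ℕ) : Set ℕ :=
  {k | ∃ n ∈ A, ∃ m ≤ (A ∩ Iic n).ncard, m + n = k}

lemma rankShift_mem_add {p : Ultrafilter ℕ} (hp : (p : Filter ℕ) ≤ atTop)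
    (q : Ultrafilter ℕ) {A : Set ℕ} (hA : A ∈ p) : rankShift A ∈ q + p := by
  refine (Ultrafilter.eventually_add q p _).2 (Eventually.of_forall fun m => ?_)
  have hinf : A.Infinite :=
    Nat.frequently_atTop_iff_infinite.1 ((Eventually.frequently hA).filter_mono hp)
  obtain ⟨n₀, hn₀⟩ := hinf.exists_le_ncard_inter_Iic m
  filter_upwards [hA, hp (Ioi_mem_atTop n₀)] with n hn hlt
  exact ⟨n, hn, m,
    hn₀.trans (ncard_inter_mono_right A (Iic_subset_Iic.2 hlt.le) (finite_Iic n)), rfl⟩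

lemma rankShift_inter_Iio_subset (A : Set ℕ) (b : ℕ) :
    rankShift A ∩ Iio b ⊆ image2 (· + ·) (Iic (A ∩ Iio b).ncard) (A ∩ Iio b) := by
  rintro _ ⟨⟨n, hn, m, hm, rfl⟩, hlt⟩
  have hnb : n < b := (Nat.le_add_left n m).trans_lt hlt
  exact ⟨m, hm.trans (ncard_inter_mono_right A (Iic_subset_Iio.2 hnb) (finite_Iio b)), n,
    ⟨hn, hnb⟩, rfl⟩

lemma ncard_rankShift_inter_Iio_le (A : Set ℕ) (b : ℕ) :
    (rankShift A ∩ Iio b).ncard ≤ ((A ∩ Iio b).ncard + 1) * (A ∩ Iio b).ncard := by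
  have hfin : (A ∩ Iio b).Finite := (finite_Iio b).inter_of_right A
  calc (rankShift A ∩ Iio b).ncard
      ≤ (image2 (· + ·) (Iic (A ∩ Iio b).ncard) (A ∩ Iio b)).ncard :=
        ncard_le_ncard (rankShift_inter_Iio_subset A b) ((finite_Iic _).image2 _ hfin)
    _ ≤ _ := (ncard_image2_le _ (finite_Iic _) hfin).trans_eq (by rw [ncard_Iic_nat])

lemma Rapid.add_left {p : Ultrafilter ℕ} (hp : Rapid p) (q : Ultrafilter ℕ) :
    Rapid (q + p) := by
  intro f
  obtain ⟨A, hA, hsmall⟩ := hp fun j => (Finset.range ((j + 1) * (j + 1))).sup f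
  refine ⟨rankShift A, rankShift_mem_add hp.le_atTop q hA, fun i hi => ?_⟩
  set j := Nat.sqrt i
  have hfi : f i ≤ (Finset.range ((j + 1) * (j + 1))).sup f :=
    Finset.le_sup (Finset.mem_range.2 (Nat.lt_succ_sqrt i))
  set k := (A ∩ Iio (f i)).ncard
  have hk : k < j := (ncard_inter_mono_right A (Iio_subset_Iio hfi) (finite_Iio _)).trans_lt
    (hsmall j (Nat.sqrt_pos.2 hi))
  calc (rankShift A ∩ Iio (f i)).ncard ≤ (k + 1) * k := ncard_rankShift_inter_Iio_le A (f i)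
    _ < i := by nlinarith [Nat.sqrt_le i]

theorem stmt_13 :
    (∀ p q : Ultrafilter ℕ, Rapid p → Rapid (addUF q p)) ∧
    ((∃ p : Ultrafilter ℕ, Rapid p) →
      ∃ L : Set (Ultrafilter ℕ), IsMinimalLeftIdeal L ∧ (∀ r ∈ L, Rapid r) ∧
        ∃ r ∈ L, addUF r r = r) := by
  refine ⟨fun p q hp => hp.add_left q, fun ⟨p, hp⟩ => ?_⟩
  have hL₀ : IsClosedLeftIdeal (range (· + p)) :=
    ⟨⟨p + p, p, rfl⟩, (Ultrafilter.continuous_add_left p).isClosedMap.isClosed_range,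
      absorbsAddLeft_range_add_right p⟩
  obtain ⟨L, hLL₀, hideal, hmin, hidem⟩ :=
    hL₀.exists_minimal_leftIdeal_subset Ultrafilter.continuous_add_left
  refine ⟨L, ⟨hideal, hmin⟩, fun r hr => ?_, hidem⟩
  obtain ⟨q, rfl⟩ := hLL₀ hr
  exact hp.add_left q
end
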